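/- For CPTD maps, diamond fidelity one implies proportionality: if E is a CPTD map and E₀ a CPTP map on L(H_i), and F_◇(E,E₀) = 1 (equivalently, for every pure bipartite state φ with t(E|φ) > 0, the normalized output (E⊗𝟙)[φ]/t(E|φ) equals (E₀⊗𝟙)[φ]), then there exists t ∈ (0,1] such that E = t·E₀. -/

import Mathlib

open Matrix Kronecker MeasureTheory ComplexOrder

noncomputable section

def msqrt {α : Type*} [Fintype α] [DecidableEq α] (A : Matrix α α ℂ) : Matrix α α ℂ :=
  open scoped Classical in
  if h : A.PosSemidef then
    h.1.eigenvectorUnitary.1 * diagonal ((↑) ∘ (√·) ∘ h.1.eigenvalues) *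
      (star h.1.eigenvectorUnitary : Matrix α α ℂ)
  else 0

def fid {α : Type*} [Fintype α] [DecidableEq α] (ρ σ : Matrix α α ℂ) : ℝ :=
  ((msqrt (msqrt ρ * σ * msqrt ρ)).trace).re ^ 2

def sineDist {α : Type*} [Fintype α] [DecidableEq α] (ρ σ : Matrix α α ℂ) : ℝ :=
  Real.sqrt (1 - fid ρ σ)

def traceDist {α : Type*} [Fintype α] [DecidableEq α] (ρ σ : Matrix α α ℂ) : ℝ :=
  (1/2) * ((msqrt ((ρ - σ)ᴴ * (ρ - σ))).trace).re

def IsDensity {α : Type*} [Fintype α] (ρ : Matrix α α ℂ) : Prop :=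
  ρ.PosSemidef ∧ ρ.trace = 1

def IsPureState {α : Type*} [Fintype α] (ρ : Matrix α α ℂ) : Prop :=
  IsDensity ρ ∧ ∃ ψ : α → ℂ, ρ = Matrix.vecMulVec ψ (star ψ)

def tr' {α : Type*} [Fintype α] (A : Matrix α α ℂ) : ℝ := A.trace.re

def nstate {α : Type*} [Fintype α] (ρ : Matrix α α ℂ) : Matrix α α ℂ :=
  (((tr' ρ : ℝ) : ℂ))⁻¹ • ρ

def IsCPTD {α β : Type*} [Fintype α] [Fintype β] [DecidableEq α] [DecidableEq β]
    (E : Matrix α α ℂ →ₗ[ℂ] Matrix β β ℂ) : Prop :=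
  ∃ (k : ℕ) (K : Fin k → Matrix β α ℂ),
    (∀ ρ, E ρ = ∑ i, K i * ρ * (K i)ᴴ) ∧ (1 - ∑ i, (K i)ᴴ * K i).PosSemidef

def IsCPTP {α β : Type*} [Fintype α] [Fintype β] [DecidableEq α] [DecidableEq β]
    (E : Matrix α α ℂ →ₗ[ℂ] Matrix β β ℂ) : Prop :=
  ∃ (k : ℕ) (K : Fin k → Matrix β α ℂ),
    (∀ ρ, E ρ = ∑ i, K i * ρ * (K i)ᴴ) ∧ (∑ i, (K i)ᴴ * K i = 1)

def tensId {α β γ : Type*} [Fintype α]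
    (E : Matrix α α ℂ → Matrix β β ℂ)
    (ρ : Matrix (α × γ) (α × γ) ℂ) : Matrix (β × γ) (β × γ) ℂ :=
  Matrix.of fun p q => E (Matrix.of fun a b => ρ (a, p.2) (b, q.2)) p.1 q.1

def maxEnt (d : ℕ) : Matrix (Fin d × Fin d) (Fin d × Fin d) ℂ :=
  Matrix.of fun p q => if p.1 = p.2 ∧ q.1 = q.2 then ((d : ℂ))⁻¹ else 0

def ptraceSnd {α β : Type*} [Fintype β] (ρ : Matrix (α × β) (α × β) ℂ) : Matrix α α ℂ :=
  Matrix.of fun a b => ∑ j, ρ (a, j) (b, j)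

def ptraceFst {α β : Type*} [Fintype α] (ρ : Matrix (α × β) (α × β) ℂ) : Matrix β β ℂ :=
  Matrix.of fun i j => ∑ a, ρ (a, i) (a, j)

def choiSine {m n : ℕ} (E₁ E₂ : Matrix (Fin m) (Fin m) ℂ →ₗ[ℂ] Matrix (Fin n) (Fin n) ℂ) : ℝ :=
  sineDist (nstate (tensId (⇑E₁) (maxEnt m))) (nstate (tensId (⇑E₂) (maxEnt m)))

def diamondSine {m n : ℕ} (E₁ E₂ : Matrix (Fin m) (Fin m) ℂ →ₗ[ℂ] Matrix (Fin n) (Fin n) ℂ) : ℝ :=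
  sSup { x | ∃ ρ : Matrix (Fin m × Fin m) (Fin m × Fin m) ℂ, IsPureState ρ ∧
    tr' (tensId (⇑E₁) ρ) ≠ 0 ∧ tr' (tensId (⇑E₂) ρ) ≠ 0 ∧
    x = sineDist (nstate (tensId (⇑E₁) ρ)) (nstate (tensId (⇑E₂) ρ)) }

/-!
Feed the maximally entangled state to the hypothesis: its image under `E ⊗ 𝟙` is the Choi
matrix of `E`, whose trace `t = Tr (E 𝟙) / d` is positive because `E ≠ 0` has a nonzero Kraus
operator, and at most one because `∑ Kᵢᴴ Kᵢ ≤ 𝟙`. Hence the Choi matrix of `E` is `t` times that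
of `E₀`, and the Choi–Jamiołkowski correspondence is injective.
-/

lemma tensId_smul {α β γ : Type*} [Fintype α] (c : ℂ) (E : Matrix α α ℂ → Matrix β β ℂ)
    (ρ : Matrix (α × γ) (α × γ) ℂ) : tensId (c • E) ρ = c • tensId E ρ := by
  ext p q
  simp [tensId]

lemma tensId_maxEnt_apply {d : ℕ} {β : Type*} (E : Matrix (Fin d) (Fin d) ℂ →ₗ[ℂ] Matrix β β ℂ)
    (a b : β) (i j : Fin d) :
    tensId (⇑E) (maxEnt d) (a, i) (b, j) = (d : ℂ)⁻¹ * E (single i j 1) a b := by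
  have : (Matrix.of fun k l => maxEnt d (k, i) (l, j)) = (d : ℂ)⁻¹ • single i j 1 := by
    ext k l
    simp [maxEnt, single_apply, eq_comm]
  simp only [tensId, of_apply, this, map_smul, Matrix.smul_apply, smul_eq_mul]

lemma trace_tensId_maxEnt {d : ℕ} {β : Type*} [Fintype β]
    (E : Matrix (Fin d) (Fin d) ℂ →ₗ[ℂ] Matrix β β ℂ) :
    (tensId (⇑E) (maxEnt d)).trace = (d : ℂ)⁻¹ * (E 1).trace := by
  rw [← sum_single_one, map_sum, trace_sum, Finset.mul_sum]
  simp only [trace, diag, Fintype.sum_prod_type, tensId_maxEnt_apply, Finset.mul_sum]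
  exact Finset.sum_comm

lemma eq_of_tensId_maxEnt_eq {d : ℕ} {β : Type*}
    {E F : Matrix (Fin d) (Fin d) ℂ →ₗ[ℂ] Matrix β β ℂ}
    (h : tensId (⇑E) (maxEnt d) = tensId (⇑F) (maxEnt d)) : E = F := by
  apply Matrix.ext_linearMap
  intro i j
  apply LinearMap.ext_ring
  have hd : (d : ℂ)⁻¹ ≠ 0 := by simp [i.pos.ne']
  ext a b
  have := Matrix.ext_iff.mpr h (a, i) (b, j)
  rw [tensId_maxEnt_apply, tensId_maxEnt_apply] at this
  simpa [hd] using this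

lemma maxEnt_eq_vecMulVec (d : ℕ) :
    maxEnt d = vecMulVec (fun p => if p.1 = p.2 then ((√d : ℝ) : ℂ)⁻¹ else 0)
      (star fun p => if p.1 = p.2 then ((√d : ℝ) : ℂ)⁻¹ else 0) := by
  have hsq : ((√d : ℝ) : ℂ)⁻¹ * ((√d : ℝ) : ℂ)⁻¹ = (d : ℂ)⁻¹ := by
    rw [← mul_inv, ← Complex.ofReal_mul, Real.mul_self_sqrt d.cast_nonneg, Complex.ofReal_natCast]
  ext p q
  by_cases hp : p.1 = p.2 <;> by_cases hq : q.1 = q.2 <;>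
    simp [maxEnt, vecMulVec_apply, hp, hq, Complex.conj_ofReal, hsq]

lemma trace_maxEnt (d : ℕ) [NeZero d] : (maxEnt d).trace = 1 := by
  simp [trace, maxEnt, Fintype.sum_prod_type]

lemma isPureState_maxEnt (d : ℕ) [NeZero d] : IsPureState (maxEnt d) := by
  refine ⟨⟨?_, trace_maxEnt d⟩, _, maxEnt_eq_vecMulVec d⟩
  rw [maxEnt_eq_vecMulVec]
  exact posSemidef_vecMulVec_self_star _

lemma IsCPTD.trace_map_one_pos {α β : Type*} [Fintype α] [Fintype β] [DecidableEq α]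
    [DecidableEq β] {E : Matrix α α ℂ →ₗ[ℂ] Matrix β β ℂ} (hE : IsCPTD E) (hne : E ≠ 0) :
    0 < (E 1).trace := by
  obtain ⟨k, K, hK, -⟩ := hE
  obtain ⟨i, hi⟩ : ∃ i, K i ≠ 0 := by
    by_contra! h
    exact hne (LinearMap.ext fun ρ => by simp [hK, h])
  have hnonneg i : 0 ≤ (K i * (K i)ᴴ).trace :=
    (posSemidef_self_mul_conjTranspose (K i)).trace_nonneg
  rw [hK, trace_sum]
  refine Finset.sum_pos' (fun i _ => by simpa using hnonneg i) ⟨i, Finset.mem_univ _, ?_⟩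
  simpa using (hnonneg i).lt_of_ne' (trace_mul_conjTranspose_self_eq_zero_iff.not.mpr hi)

lemma IsCPTD.trace_map_one_le {α β : Type*} [Fintype α] [Fintype β] [DecidableEq α]
    [DecidableEq β] {E : Matrix α α ℂ →ₗ[ℂ] Matrix β β ℂ} (hE : IsCPTD E) :
    (E 1).trace ≤ Fintype.card α := by
  obtain ⟨k, K, hK, hle⟩ := hE
  have := hle.trace_nonneg
  rw [trace_sub, trace_one, sub_nonneg] at this
  simpa [hK, trace_sum, trace_mul_comm (K _)] using this

theorem diamond_fidelity_one_implies_proportional_general {d : ℕ}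
    (E E₀ : Matrix (Fin d) (Fin d) ℂ →ₗ[ℂ] Matrix (Fin d) (Fin d) ℂ)
    (hE : IsCPTD E) (hne : E ≠ 0)
    (h : ∀ φ : Matrix (Fin d × Fin d) (Fin d × Fin d) ℂ, IsPureState φ →
      0 < tr' (tensId (⇑E) φ) → nstate (tensId (⇑E) φ) = tensId (⇑E₀) φ) :
    ∃ t : ℝ, 0 < t ∧ t ≤ 1 ∧ E = (t : ℂ) • E₀ := by
  have : NeZero d := ⟨by rintro rfl; exact hne (Subsingleton.elim _ _)⟩
  have hd : (0 : ℂ) < d := by exact_mod_cast NeZero.pos d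
  have hpos : 0 < (tensId (⇑E) (maxEnt d)).trace := by
    rw [trace_tensId_maxEnt]
    exact mul_pos (inv_pos.mpr hd) (hE.trace_map_one_pos hne)
  have hle : (tensId (⇑E) (maxEnt d)).trace ≤ 1 := by
    rw [trace_tensId_maxEnt, inv_mul_le_iff₀ hd, mul_one]
    simpa using hE.trace_map_one_le
  set t := tr' (tensId (⇑E) (maxEnt d)) with ht
  have htpos : 0 < t := (Complex.lt_def.mp hpos).1
  refine ⟨t, htpos, (Complex.le_def.mp hle).1, eq_of_tensId_maxEnt_eq ?_⟩
  have hnorm := h (maxEnt d) (isPureState_maxEnt d) htpos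
  rw [nstate, ← ht] at hnorm
  rw [LinearMap.coe_smul, tensId_smul, ← hnorm, smul_inv_smul₀ (by exact_mod_cast htpos.ne')]

/-- Diamond fidelity one implies the CPTD map is proportional to the CPTP map. -/
theorem diamond_fidelity_one_implies_proportional {d : ℕ}
    (E E₀ : Matrix (Fin d) (Fin d) ℂ →ₗ[ℂ] Matrix (Fin d) (Fin d) ℂ)
    (hE : IsCPTD E) (hE₀ : IsCPTP E₀) (hne : E ≠ 0)
    (h : ∀ φ : Matrix (Fin d × Fin d) (Fin d × Fin d) ℂ, IsPureState φ →
      0 < tr' (tensId (⇑E) φ) → nstate (tensId (⇑E) φ) = tensId (⇑E₀) φ) :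
    ∃ t : ℝ, 0 < t ∧ t ≤ 1 ∧ E = (t : ℂ) • E₀ :=
  diamond_fidelity_one_implies_proportional_general E E₀ hE hne h
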